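/- arXiv:1404.1067 — 7 statements merged into one kernel-verified Lean document; each statement's English description precedes it below -/
import Mathlib

section
/- The symmetrized bidisc G_2 = {(s,p) ∈ ℂ² : |s - conj(s)·p| + |p|² < 1} equals the image of the bidisc 𝔻² under the symmetrization map p(λ₁,λ₂) = (λ₁+λ₂, λ₁λ₂). -/
open Complex Metric Set
open scoped ComplexConjugate

/-!
Writing `s = z + w`, `p = z w`, one has `s - s̄ p = z (1 - |w|²) + w (1 - |z|²)`. With `a = |z|`,
`b = |w|`, the triangle inequality therefore puts `|s - s̄ p| + |p|²` within the two bounds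
`a |1 - b²| ± b |1 - a²| + a² b²`, and
`1 - (a (1 - b²) + b (1 - a²) + a² b²) = (1 - a) (1 - b) (1 - a b)`.
This product is positive when `a, b < 1`, and nonpositive when `a ≥ 1` and `a b < 1`
(as `|p|² < 1` forces).
Since every `(s, p)` is symmetrized from the roots of `X² - s X + p`, this identifies `G₂`.
-/

theorem exists_add_eq_and_mul_eq {K : Type*} [Field K] [IsAlgClosed K] (s p : K) :
    ∃ z w : K, z + w = s ∧ z * w = p := by
  open Polynomial in
  obtain ⟨z, hz⟩ := IsAlgClosed.exists_root (C 1 * X ^ 2 + C (-s) * X + C p)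
    (by rw [degree_quadratic one_ne_zero]; decide)
  refine ⟨z, s - z, add_sub_cancel z s, ?_⟩
  simp only [IsRoot, eval_add, eval_mul, eval_pow, eval_C, eval_X] at hz
  linear_combination -hz

theorem add_sub_conj_add_mul_mul (z w : ℂ) :
    z + w - conj (z + w) * (z * w) =
      z * ((1 - ‖w‖ ^ 2 : ℝ) : ℂ) + w * ((1 - ‖z‖ ^ 2 : ℝ) : ℂ) := by
  push_cast
  rw [← mul_conj', ← mul_conj', map_add]
  ring

theorem norm_add_sub_conj_add_mul_mul_le (z w : ℂ) :
    ‖z + w - conj (z + w) * (z * w)‖ ≤ ‖z‖ * |1 - ‖w‖ ^ 2| + ‖w‖ * |1 - ‖z‖ ^ 2| := by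
  rw [add_sub_conj_add_mul_mul]
  refine (norm_add_le _ _).trans_eq ?_
  simp only [norm_mul, norm_real, Real.norm_eq_abs]

theorem le_norm_add_sub_conj_add_mul_mul (z w : ℂ) :
    ‖z‖ * |1 - ‖w‖ ^ 2| - ‖w‖ * |1 - ‖z‖ ^ 2| ≤ ‖z + w - conj (z + w) * (z * w)‖ := by
  rw [add_sub_conj_add_mul_mul, ← sub_neg_eq_add]
  refine (norm_sub_norm_le _ _).trans_eq' ?_
  simp only [norm_neg, norm_mul, norm_real, Real.norm_eq_abs]

theorem norm_lt_one_of_norm_add_sub_conj_add_mul_mul_add_sq_lt_one {z w : ℂ}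
    (h : ‖z + w - conj (z + w) * (z * w)‖ + ‖z * w‖ ^ 2 < 1) : ‖z‖ < 1 := by
  by_contra! ha
  have hb : 0 ≤ ‖w‖ := norm_nonneg w
  rw [norm_mul] at h
  have hab : ‖z‖ * ‖w‖ < 1 := by
    nlinarith [norm_nonneg (z + w - conj (z + w) * (z * w))]
  have hb1 : ‖w‖ < 1 := by nlinarith
  have hlower := le_norm_add_sub_conj_add_mul_mul z w
  rw [abs_of_nonneg (by nlinarith), abs_of_nonpos (by nlinarith)] at hlower
  nlinarith [mul_nonneg (mul_nonneg (sub_nonneg.2 ha) (sub_nonneg.2 hb1.le)) (sub_nonneg.2 hab.le)]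

theorem norm_add_sub_conj_add_mul_mul_add_sq_lt_one_iff (z w : ℂ) :
    ‖z + w - conj (z + w) * (z * w)‖ + ‖z * w‖ ^ 2 < 1 ↔ ‖z‖ < 1 ∧ ‖w‖ < 1 := by
  constructor
  · intro h
    refine ⟨norm_lt_one_of_norm_add_sub_conj_add_mul_mul_add_sq_lt_one h,
      norm_lt_one_of_norm_add_sub_conj_add_mul_mul_add_sq_lt_one (z := w) (w := z) ?_⟩
    rwa [add_comm w, mul_comm w]
  · rintro ⟨ha, hb⟩
    have ha0 : 0 ≤ ‖z‖ := norm_nonneg z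
    have hb0 : 0 ≤ ‖w‖ := norm_nonneg w
    have hupper := norm_add_sub_conj_add_mul_mul_le z w
    rw [abs_of_nonneg (by nlinarith), abs_of_nonneg (by nlinarith)] at hupper
    rw [norm_mul]
    have hab : ‖z‖ * ‖w‖ < 1 := mul_lt_one_of_nonneg_of_lt_one_left ha0 ha hb.le
    nlinarith [mul_pos (mul_pos (sub_pos.2 ha) (sub_pos.2 hb)) (sub_pos.2 hab)]

/-- The symmetrized bidisc equals the image of the bidisc under symmetrization. -/
theorem symmetrized_bidisc_eq_image :
    {z : ℂ × ℂ | ‖z.1 - conj z.1 * z.2‖ + ‖z.2‖ ^ 2 < 1} =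
      (fun w : ℂ × ℂ => (w.1 + w.2, w.1 * w.2)) '' (ball (0 : ℂ) 1 ×ˢ ball (0 : ℂ) 1) := by
  refine Subset.antisymm ?_ ?_
  · rintro ⟨s, p⟩ h
    obtain ⟨z, w, rfl, rfl⟩ := exists_add_eq_and_mul_eq s p
    exact ⟨(z, w), by simpa using (norm_add_sub_conj_add_mul_mul_add_sq_lt_one_iff z w).1 h, rfl⟩
  · rintro _ ⟨⟨z, w⟩, hzw, rfl⟩
    exact (norm_add_sub_conj_add_mul_mul_add_sq_lt_one_iff z w).2 (by simpa using hzw)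
end

section
/- The symmetrized bidisc G_2 equals the image of the Cartan domain R_I = {x ∈ ℂ^{2×2} : ‖x‖_op < 1} under the map π(x) = (tr x, det x). -/
/-!
Trace and determinant of `x` are the sum and product of the two roots of its characteristic
polynomial, i.e. of its eigenvalues, and every eigenvalue is bounded in modulus by the operator
norm; this gives one inclusion. Conversely `(λ₁ + λ₂, λ₁λ₂)` is the image of `diagonal ![λ₁, λ₂]`,
whose operator norm is `max |λ₁| |λ₂|`.
-/

open Complex Metric Set Matrix
open scoped Matrix.Norms.L2Operator

theorem Matrix.norm_le_l2_opNorm_of_mem_roots_charpoly {𝕜 n : Type*} [RCLike 𝕜] [Fintype n]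
    [DecidableEq n] [Nonempty n] {A : Matrix n n 𝕜} {μ : 𝕜} (hμ : μ ∈ A.charpoly.roots) :
    ‖μ‖ ≤ ‖A‖ :=
  spectrum.norm_le_norm_of_mem <|
    mem_spectrum_iff_isRoot_charpoly.mpr (Polynomial.isRoot_of_mem_roots hμ)

theorem Matrix.exists_roots_charpoly_eq_pair {K : Type*} [Field K] [IsAlgClosed K]
    (A : Matrix (Fin 2) (Fin 2) K) : ∃ a b, A.charpoly.roots = {a, b} := by
  apply Multiset.card_eq_two.mp
  rw [← (IsAlgClosed.splits A.charpoly).natDegree_eq_card_roots, charpoly_natDegree_eq_dim,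
    Fintype.card_fin]

/-- The symmetrized bidisc is the image of the Cartan domain `R_I` (operator-norm unit
ball of `2×2` matrices) under `π(x) = (tr x, det x)`. -/
theorem symmetrized_bidisc_eq_image_cartan :
    (fun x : Matrix (Fin 2) (Fin 2) ℂ => (x.trace, x.det)) ''
        {x : Matrix (Fin 2) (Fin 2) ℂ | ‖x‖ < 1} =
      (fun w : ℂ × ℂ => (w.1 + w.2, w.1 * w.2)) '' (ball (0 : ℂ) 1 ×ˢ ball (0 : ℂ) 1) := by
  ext p
  constructor
  · rintro ⟨x, hx, rfl⟩
    obtain ⟨a, b, hroots⟩ := x.exists_roots_charpoly_eq_pair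
    have hball : ∀ μ ∈ x.charpoly.roots, μ ∈ ball (0 : ℂ) 1 := fun μ hμ =>
      mem_ball_zero_iff.mpr ((norm_le_l2_opNorm_of_mem_roots_charpoly hμ).trans_lt hx)
    refine ⟨(a, b), ⟨hball a (by simp [hroots]), hball b (by simp [hroots])⟩, ?_⟩
    simp [trace_eq_sum_roots_charpoly, det_eq_prod_roots_charpoly, hroots]
  · rintro ⟨⟨a, b⟩, ⟨ha, hb⟩, rfl⟩
    refine ⟨diagonal ![a, b], ?_, by simp⟩
    show ‖diagonal ![a, b]‖ < 1
    rw [l2_opNorm_diagonal, pi_norm_lt_iff one_pos, Fin.forall_fin_two]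
    exact ⟨mem_ball_zero_iff.mp ha, mem_ball_zero_iff.mp hb⟩
end

section
/- For every (s,p) in the symmetrized bidisc G_2 there exists a symmetric 2×2 matrix x with operator norm at most 1 such that tr x = s and det x = p. -/
open Complex Metric Set Matrix
open scoped Matrix.Norms.L2Operator

/-- Every point of the symmetrized bidisc lifts to a symmetric `2×2` matrix of operator
norm at most `1` with the prescribed trace and determinant. -/
theorem exists_symmetric_lift (s p : ℂ)
    (h : (s, p) ∈ (fun w : ℂ × ℂ => (w.1 + w.2, w.1 * w.2)) ''
      (ball (0 : ℂ) 1 ×ˢ ball (0 : ℂ) 1)) :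
    ∃ x : Matrix (Fin 2) (Fin 2) ℂ, x = xᵀ ∧ ‖x‖ ≤ 1 ∧ x.trace = s ∧ x.det = p := by
  obtain ⟨⟨a, b⟩, ⟨ha, hb⟩, hsp⟩ := h
  obtain ⟨rfl, rfl⟩ := Prod.mk.inj hsp
  rw [mem_ball_zero_iff] at ha hb
  have hnorm : ‖(![a, b] : Fin 2 → ℂ)‖ ≤ 1 :=
    (pi_norm_le_iff_of_nonneg zero_le_one).2 (Fin.forall_fin_two.2 ⟨ha.le, hb.le⟩)
  refine ⟨diagonal ![a, b], (diagonal_transpose _).symm, (l2_opNorm_diagonal _).trans_le hnorm,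
    ?_, ?_⟩
  · simp [trace_diagonal, Fin.sum_univ_two]
  · simp [det_diagonal, Fin.prod_univ_two]
end

section
/- The Shilov boundary characterization: the set {(λ₁+λ₂, λ₁λ₂) : λ₁, λ₂ ∈ 𝕋} (where 𝕋 is the unit circle) is contained in the topological boundary of G_2, and every holomorphic function on a neighborhood of the closure of G_2 attains its maximum modulus over cl(G_2) on this set. -/
open Complex Metric Set

/-- The symmetrized bidisc. -/
def symBidisc : Set (ℂ × ℂ) :=
  (fun w : ℂ × ℂ => (w.1 + w.2, w.1 * w.2)) '' (ball (0 : ℂ) 1 ×ˢ ball (0 : ℂ) 1)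

/-- The distinguished (Shilov) boundary candidate: symmetrization of the torus. -/
def symTorus : Set (ℂ × ℂ) :=
  (fun w : ℂ × ℂ => (w.1 + w.2, w.1 * w.2)) '' (sphere (0 : ℂ) 1 ×ˢ sphere (0 : ℂ) 1)

/-!
The closure of `G₂` is the image of the closed bidisc under the symmetrization
`π (λ₁, λ₂) = (λ₁ + λ₂, λ₁ λ₂)`. A function `f` holomorphic near it pulls back to `f ∘ π`,
holomorphic on the closed bidisc; applying the one-variable maximum modulus principle first in
`λ₁` and then in `λ₂` moves a maximum of `‖f ∘ π‖` onto the torus `𝕋 × 𝕋`.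
A point `π (λ₁, λ₂)` with `λ₁ ∈ 𝕋` lies in the closure of `G₂` but not in `G₂`, because the
unordered pair `{λ₁, λ₂}` is recovered from `π (λ₁, λ₂)` as the roots of `z² - (λ₁ + λ₂) z + λ₁ λ₂`.
-/

section MaximumModulus

variable {E : Type*} [NormedAddCommGroup E] [NormedSpace ℂ E]

theorem exists_mem_sphere_norm_le_of_differentiableOn_closedBall {h : ℂ → E} {c : ℂ} {r : ℝ}
    (hr : 0 < r) (hd : DifferentiableOn ℂ h (closedBall c r)) {z : ℂ} (hz : z ∈ closedBall c r) :
    ∃ w ∈ sphere c r, ‖h z‖ ≤ ‖h w‖ := by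
  rw [← closure_ball c hr.ne'] at hd hz
  obtain ⟨w, hw, hmax⟩ := Complex.exists_mem_frontier_isMaxOn_norm isBounded_ball
    (nonempty_ball.2 hr) hd.diffContOnCl
  rw [frontier_ball c hr.ne'] at hw
  exact ⟨w, hw, hmax hz⟩

theorem exists_mem_sphere_prod_norm_le_of_differentiableOn {F : ℂ × ℂ → E} {c₁ c₂ : ℂ}
    {r₁ r₂ : ℝ} (hr₁ : 0 < r₁) (hr₂ : 0 < r₂)
    (hF : DifferentiableOn ℂ F (closedBall c₁ r₁ ×ˢ closedBall c₂ r₂)) {z : ℂ × ℂ}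
    (hz : z ∈ closedBall c₁ r₁ ×ˢ closedBall c₂ r₂) :
    ∃ w ∈ sphere c₁ r₁ ×ˢ sphere c₂ r₂, ‖F z‖ ≤ ‖F w‖ := by
  obtain ⟨a, ha, hza⟩ := exists_mem_sphere_norm_le_of_differentiableOn_closedBall hr₁
    (h := fun u => F (u, z.2))
    (hF.comp (differentiableOn_id.prodMk (differentiableOn_const _))
      fun u hu => ⟨hu, hz.2⟩) hz.1
  obtain ⟨b, hb, hab⟩ := exists_mem_sphere_norm_le_of_differentiableOn_closedBall hr₂
    (h := fun v => F (a, v))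
    (hF.comp ((differentiableOn_const _).prodMk differentiableOn_id)
      fun v hv => ⟨sphere_subset_closedBall ha, hv⟩) hz.2
  exact ⟨(a, b), ⟨ha, hb⟩, hza.trans hab⟩

theorem exists_mem_sphere_prod_forall_norm_le_of_differentiableOn {F : ℂ × ℂ → E} {c₁ c₂ : ℂ}
    {r₁ r₂ : ℝ} (hr₁ : 0 < r₁) (hr₂ : 0 < r₂)
    (hF : DifferentiableOn ℂ F (closedBall c₁ r₁ ×ˢ closedBall c₂ r₂)) :
    ∃ w ∈ sphere c₁ r₁ ×ˢ sphere c₂ r₂,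
      ∀ z ∈ closedBall c₁ r₁ ×ˢ closedBall c₂ r₂, ‖F z‖ ≤ ‖F w‖ := by
  obtain ⟨z, hz, hmax⟩ := ((isCompact_closedBall c₁ r₁).prod (isCompact_closedBall c₂ r₂))
    |>.exists_isMaxOn ((nonempty_closedBall.2 hr₁.le).prod (nonempty_closedBall.2 hr₂.le))
      hF.continuousOn.norm
  obtain ⟨w, hw, hzw⟩ := exists_mem_sphere_prod_norm_le_of_differentiableOn hr₁ hr₂ hF hz
  exact ⟨w, hw, fun z' hz' => (hmax hz').trans hzw⟩

end MaximumModulus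

def symmetrize (w : ℂ × ℂ) : ℂ × ℂ := (w.1 + w.2, w.1 * w.2)

theorem differentiable_symmetrize : Differentiable ℂ symmetrize :=
  (differentiable_fst.add differentiable_snd).prodMk (differentiable_fst.mul differentiable_snd)

theorem fst_eq_or_fst_eq_snd_of_symmetrize_eq {l m : ℂ × ℂ} (h : symmetrize l = symmetrize m) :
    l.1 = m.1 ∨ l.1 = m.2 := by
  have hs : l.1 + l.2 = m.1 + m.2 := congrArg Prod.fst h
  have hp : l.1 * l.2 = m.1 * m.2 := congrArg Prod.snd h
  have hroot : (l.1 - m.1) * (l.1 - m.2) = 0 := by linear_combination l.1 * hs - hp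
  simpa [sub_eq_zero] using hroot

theorem closure_symBidisc :
    closure symBidisc = symmetrize '' (closedBall 0 1 ×ˢ closedBall 0 1) := by
  have hcl : closure (ball (0 : ℂ) 1 ×ˢ ball (0 : ℂ) 1) = closedBall 0 1 ×ˢ closedBall 0 1 := by
    rw [closure_prod_eq, closure_ball _ one_ne_zero]
  rw [← hcl, image_closure_of_isCompact (hcl ▸ (isCompact_closedBall _ _).prod
    (isCompact_closedBall _ _)) differentiable_symmetrize.continuous.continuousOn]
  rfl

theorem disjoint_symTorus_symBidisc : Disjoint symTorus symBidisc := by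
  rw [Set.disjoint_left]
  rintro _ ⟨l, ⟨hl₁, -⟩, rfl⟩ ⟨m, ⟨hm₁, hm₂⟩, hml⟩
  rw [mem_sphere_zero_iff_norm] at hl₁
  rw [mem_ball_zero_iff] at hm₁ hm₂
  rcases fst_eq_or_fst_eq_snd_of_symmetrize_eq hml.symm with h | h <;> rw [h] at hl₁ <;> linarith

theorem symTorus_subset_frontier_symBidisc : symTorus ⊆ frontier symBidisc := by
  intro z hz
  refine ⟨?_, fun hint => disjoint_symTorus_symBidisc.ne_of_mem hz (interior_subset hint) rfl⟩
  rw [closure_symBidisc]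
  exact image_mono (prod_mono sphere_subset_closedBall sphere_subset_closedBall) hz

/-- `symTorus` is contained in the topological boundary of the symmetrized bidisc, and every
function holomorphic on a neighborhood of the closure attains its maximum modulus there. -/
theorem shilov_boundary_symmetrized_bidisc :
    symTorus ⊆ frontier symBidisc ∧
    ∀ (U : Set (ℂ × ℂ)) (f : ℂ × ℂ → ℂ), IsOpen U → closure symBidisc ⊆ U →
      DifferentiableOn ℂ f U →
      ∃ w ∈ symTorus, ∀ z ∈ closure symBidisc, ‖f z‖ ≤ ‖f w‖ := by
  refine ⟨symTorus_subset_frontier_symBidisc, fun U f _ hcl hf => ?_⟩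
  have hF : DifferentiableOn ℂ (f ∘ symmetrize) (closedBall 0 1 ×ˢ closedBall 0 1) :=
    hf.comp differentiable_symmetrize.differentiableOn fun p hp =>
      hcl (closure_symBidisc ▸ mem_image_of_mem symmetrize hp)
  obtain ⟨w, hw, hmax⟩ :=
    exists_mem_sphere_prod_forall_norm_le_of_differentiableOn one_pos one_pos hF
  refine ⟨symmetrize w, mem_image_of_mem symmetrize hw, ?_⟩
  rw [closure_symBidisc]
  rintro _ ⟨p, hp, rfl⟩
  exact hmax p hp
end

section
/- For any Möbius transformation m of the unit disc, the map G_2 ∋ (λ₁+λ₂, λ₁λ₂) ↦ (m(λ₁)+m(λ₂), m(λ₁)m(λ₂)) is well-defined and is a holomorphic automorphism of G_2. -/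
/-!
A Möbius map `m z = ω (a - z) / (1 - ā z)` has a denominator that does not vanish on `𝔻`, so
`m λ₁ + m λ₂` and `m λ₁ · m λ₂` are rational functions of `s = λ₁ + λ₂` and `p = λ₁ λ₂` over the
common denominator `(1 - ā λ₁)(1 - ā λ₂) = 1 - ā s + ā² p`; this defines the induced map on all of
`G₂` at once and makes it holomorphic there. It maps `G₂` into itself because `m` maps `𝔻` into
itself (`|1 - ā z|² - |a - z|² = (1 - |a|²)(1 - |z|²)`), and the map induced by the Möbius
inverse `z ↦ ω̄ (ω a - z) / (1 - conj (ω a) z)` of `m` is its inverse.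
-/

open Complex Metric Set
open scoped ComplexConjugate

/-- A Möbius transformation of the unit disc. -/
noncomputable def moebius (a ω z : ℂ) : ℂ := ω * (a - z) / (1 - conj a * z)

lemma one_sub_conj_mul_ne_zero {a z : ℂ} (ha : ‖a‖ ≤ 1) (hz : ‖z‖ < 1) : 1 - conj a * z ≠ 0 := by
  refine sub_ne_zero.mpr fun h => ?_
  have : ‖conj a * z‖ < 1 := by
    rw [norm_mul, norm_conj]
    exact mul_lt_one_of_nonneg_of_lt_one_right ha (norm_nonneg z) hz
  rw [← h, norm_one] at this
  exact lt_irrefl 1 this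

lemma normSq_one_sub_conj_mul_sub_normSq_sub (a z : ℂ) :
    normSq (1 - conj a * z) - normSq (a - z) = (1 - normSq a) * (1 - normSq z) := by
  simp only [normSq_apply, sub_re, sub_im, mul_re, mul_im, conj_re, conj_im, one_re, one_im]
  ring

lemma norm_moebius_lt_one {a ω z : ℂ} (ha : ‖a‖ < 1) (hω : ‖ω‖ = 1) (hz : ‖z‖ < 1) :
    ‖moebius a ω z‖ < 1 := by
  have hsq : ‖a - z‖ ^ 2 < ‖1 - conj a * z‖ ^ 2 := by
    have key := normSq_one_sub_conj_mul_sub_normSq_sub a z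
    simp only [← Complex.sq_norm] at key
    have hpos : 0 < (1 - ‖a‖ ^ 2) * (1 - ‖z‖ ^ 2) :=
      mul_pos (sub_pos.mpr (pow_lt_one₀ (norm_nonneg a) ha two_ne_zero))
        (sub_pos.mpr (pow_lt_one₀ (norm_nonneg z) hz two_ne_zero))
    linarith
  rw [moebius, norm_div, norm_mul, hω, one_mul,
    div_lt_one (norm_pos_iff.mpr (one_sub_conj_mul_ne_zero ha.le hz))]
  exact lt_of_pow_lt_pow_left₀ 2 (norm_nonneg _) hsq

lemma moebius_mul_conj_moebius {a ω z : ℂ} (ha : ‖a‖ < 1) (hω : ‖ω‖ = 1) (hz : 1 - conj a * z ≠ 0) :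
    moebius (ω * a) (conj ω) (moebius a ω z) = z := by
  have hωω : conj ω * ω = 1 := by rw [conj_mul', hω]; norm_num
  have haa : 1 - conj a * a ≠ 0 := one_sub_conj_mul_ne_zero ha.le ha
  -- `field_simp` rewrites the denominator `1 - ā z` into this form
  have hz' : 1 - z * conj a ≠ 0 := by rwa [mul_comm]
  have hnum : ω * a - moebius a ω z = ω * z * (1 - conj a * a) / (1 - conj a * z) := by
    unfold moebius; field_simp; ring
  have hden : 1 - conj (ω * a) * moebius a ω z = (1 - conj a * a) / (1 - conj a * z) := by
    unfold moebius; rw [map_mul]; field_simp; linear_combination (z - a) * conj a * hωω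
  rw [moebius, hnum, hden]
  field_simp
  linear_combination z * hωω

lemma mem_symBidisc_iff {z : ℂ × ℂ} :
    z ∈ symBidisc ↔ ∃ l1 l2 : ℂ, ‖l1‖ < 1 ∧ ‖l2‖ < 1 ∧ (l1 + l2, l1 * l2) = z := by
  simp [symBidisc, and_assoc]

noncomputable def symMoebiusDenom (a : ℂ) (z : ℂ × ℂ) : ℂ := 1 - conj a * z.1 + conj a ^ 2 * z.2

noncomputable def symMoebius (a ω : ℂ) (z : ℂ × ℂ) : ℂ × ℂ :=
  (ω * (2 * a - (1 + a * conj a) * z.1 + 2 * conj a * z.2) / symMoebiusDenom a z,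
    ω ^ 2 * (a ^ 2 - a * z.1 + z.2) / symMoebiusDenom a z)

lemma symMoebiusDenom_add_mul (a l1 l2 : ℂ) :
    symMoebiusDenom a (l1 + l2, l1 * l2) = (1 - conj a * l1) * (1 - conj a * l2) := by
  rw [symMoebiusDenom]
  ring

lemma symMoebiusDenom_ne_zero {a : ℂ} (ha : ‖a‖ ≤ 1) {z : ℂ × ℂ} (hz : z ∈ symBidisc) :
    symMoebiusDenom a z ≠ 0 := by
  obtain ⟨l1, l2, h1, h2, rfl⟩ := mem_symBidisc_iff.mp hz
  rw [symMoebiusDenom_add_mul]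
  exact mul_ne_zero (one_sub_conj_mul_ne_zero ha h1) (one_sub_conj_mul_ne_zero ha h2)

lemma symMoebius_add_mul {a l1 l2 : ℂ} (ω : ℂ) (h1 : 1 - conj a * l1 ≠ 0)
    (h2 : 1 - conj a * l2 ≠ 0) :
    symMoebius a ω (l1 + l2, l1 * l2) =
      (moebius a ω l1 + moebius a ω l2, moebius a ω l1 * moebius a ω l2) := by
  simp only [symMoebius, symMoebiusDenom_add_mul, moebius]
  ext <;> field_simp <;> ring

lemma differentiableOn_symMoebius {a : ℂ} (ω : ℂ) (ha : ‖a‖ ≤ 1) :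
    DifferentiableOn ℂ (symMoebius a ω) symBidisc := by
  have hden : ∀ z ∈ symBidisc, 1 - conj a * z.1 + conj a ^ 2 * z.2 ≠ 0 :=
    fun z hz => symMoebiusDenom_ne_zero ha hz
  unfold symMoebius symMoebiusDenom
  fun_prop (disch := assumption)

lemma mapsTo_symMoebius {a ω : ℂ} (ha : ‖a‖ < 1) (hω : ‖ω‖ = 1) :
    MapsTo (symMoebius a ω) symBidisc symBidisc := by
  intro z hz
  obtain ⟨l1, l2, h1, h2, rfl⟩ := mem_symBidisc_iff.mp hz
  rw [symMoebius_add_mul ω (one_sub_conj_mul_ne_zero ha.le h1) (one_sub_conj_mul_ne_zero ha.le h2)]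
  exact mem_symBidisc_iff.mpr
    ⟨_, _, norm_moebius_lt_one ha hω h1, norm_moebius_lt_one ha hω h2, rfl⟩

lemma leftInvOn_symMoebius {a ω : ℂ} (ha : ‖a‖ < 1) (hω : ‖ω‖ = 1) :
    LeftInvOn (symMoebius (ω * a) (conj ω)) (symMoebius a ω) symBidisc := by
  intro z hz
  obtain ⟨l1, l2, h1, h2, rfl⟩ := mem_symBidisc_iff.mp hz
  have hωa : ‖ω * a‖ ≤ 1 := by rw [norm_mul, hω, one_mul]; exact ha.le
  have d1 := one_sub_conj_mul_ne_zero ha.le h1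
  have d2 := one_sub_conj_mul_ne_zero ha.le h2
  rw [symMoebius_add_mul ω d1 d2,
    symMoebius_add_mul (conj ω) (one_sub_conj_mul_ne_zero hωa (norm_moebius_lt_one ha hω h1))
      (one_sub_conj_mul_ne_zero hωa (norm_moebius_lt_one ha hω h2)),
    moebius_mul_conj_moebius ha hω d1, moebius_mul_conj_moebius ha hω d2]

lemma invOn_symMoebius {a ω : ℂ} (ha : ‖a‖ < 1) (hω : ‖ω‖ = 1) :
    InvOn (symMoebius (ω * a) (conj ω)) (symMoebius a ω) symBidisc symBidisc := by
  have hωa : ‖ω * a‖ < 1 := by rwa [norm_mul, hω, one_mul]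
  have hω' : ‖conj ω‖ = 1 := by rwa [norm_conj]
  have hinv := leftInvOn_symMoebius hωa hω'
  rw [conj_conj, ← mul_assoc, conj_mul', hω, ofReal_one, one_pow, one_mul] at hinv
  exact ⟨leftInvOn_symMoebius ha hω, hinv⟩

/-- Any Möbius transformation `m` of `𝔻` induces a well-defined holomorphic automorphism
`(λ₁+λ₂, λ₁λ₂) ↦ (m λ₁ + m λ₂, m λ₁ · m λ₂)` of the symmetrized bidisc. -/
theorem moebius_induces_automorphism (a ω : ℂ) (ha : ‖a‖ < 1)
    (hω : ‖ω‖ = 1) :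
    ∃ F : ℂ × ℂ → ℂ × ℂ,
      (∀ l1 l2 : ℂ, ‖l1‖ < 1 → ‖l2‖ < 1 →
        F (l1 + l2, l1 * l2) =
          (moebius a ω l1 + moebius a ω l2, moebius a ω l1 * moebius a ω l2)) ∧
      Set.BijOn F symBidisc symBidisc ∧
      DifferentiableOn ℂ F symBidisc ∧
      ∃ Finv : ℂ × ℂ → ℂ × ℂ, DifferentiableOn ℂ Finv symBidisc ∧
        (∀ z ∈ symBidisc, Finv (F z) = z) ∧ (∀ z ∈ symBidisc, F (Finv z) = z) := by
  have hωa : ‖ω * a‖ < 1 := by rwa [norm_mul, hω, one_mul]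
  have hinv := invOn_symMoebius ha hω
  refine ⟨symMoebius a ω, fun l1 l2 h1 h2 => ?_, ?_, differentiableOn_symMoebius ω ha.le,
    symMoebius (ω * a) (conj ω), differentiableOn_symMoebius (conj ω) hωa.le, hinv.1, hinv.2⟩
  · exact symMoebius_add_mul ω (one_sub_conj_mul_ne_zero ha.le h1)
      (one_sub_conj_mul_ne_zero ha.le h2)
  · exact hinv.bijOn (mapsTo_symMoebius ha hω) (mapsTo_symMoebius hωa (by rwa [norm_conj]))
end

section
/- For b ∈ R_I, the map Φ_b(x) = (1-bb*)^{-1/2}(b-x)(1-b*x)^{-1}(1-b*b)^{1/2} maps R_I into R_I. -/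
/-!
The Möbius identity `(1 - x*b)(1 - b*b)⁻¹(1 - b*x) - (b - x)*(1 - bb*)⁻¹(b - x) = 1 - x*x`,
a formal consequence of the push-through relation `(1 - b*b)⁻¹ = 1 + b*(1 - bb*)⁻¹b`, turns into
`1 - Φ*Φ = C*(1 - x*x)C` with `C = (1 - b*x)⁻¹T` invertible. In a unital C⋆-algebra `‖a‖ < 1`
exactly when `1 - a*a` is strictly positive, and strict positivity is invariant under congruence
by an invertible element. The `2 × 2` complex matrices with the operator norm form such an algebra.
-/

open Matrix
open scoped Matrix.Norms.L2Operator ComplexOrder MatrixOrder Ring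

namespace Ring

variable {R : Type*} [Ring R]

theorem inverse_one_sub_mul_comm {a c : R} (h : IsUnit (1 - a * c)) :
    (1 - c * a)⁻¹ʳ = 1 + c * (1 - a * c)⁻¹ʳ * a := by
  have hr : (1 - c * a) * (1 + c * (1 - a * c)⁻¹ʳ * a) = 1 := by
    calc _ = 1 - c * a + c * ((1 - a * c) * (1 - a * c)⁻¹ʳ) * a := by noncomm_ring
      _ = 1 := by rw [mul_inverse_cancel _ h]; noncomm_ring
  have hl : (1 + c * (1 - a * c)⁻¹ʳ * a) * (1 - c * a) = 1 := by
    calc _ = 1 - c * a + c * ((1 - a * c)⁻¹ʳ * (1 - a * c)) * a := by noncomm_ring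
      _ = 1 := by rw [inverse_mul_cancel _ h]; noncomm_ring
  simpa using (inverse_mul_eq_iff_eq_mul _ 1 _ ⟨⟨_, _, hr, hl⟩, rfl⟩).mpr hr.symm

theorem moebius_identity {a c x y : R} (h : IsUnit (1 - a * c)) :
    (1 - y * a) * (1 - c * a)⁻¹ʳ * (1 - c * x) - (c - y) * (1 - a * c)⁻¹ʳ * (a - x) =
      1 - y * x := by
  rw [inverse_one_sub_mul_comm h]
  have hl := inverse_mul_cancel _ h
  have hr := mul_inverse_cancel _ h
  set P := (1 - a * c)⁻¹ʳ
  calc _ = 1 - y * x + (c - y) * (P * (1 - a * c) - 1) * x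
          + y * ((1 - a * c) * P - 1) * a * (1 - c * x) := by noncomm_ring
    _ = 1 - y * x := by rw [hl, hr]; noncomm_ring

end Ring

section Moebius

variable {R : Type*} [Ring R] [StarRing R]

/-- `Φ_b(x)`, with `S` and `T` standing for `(1 - bb*)^{1/2}` and `(1 - b*b)^{1/2}`. -/
noncomputable def moebiusMap (b S T x : R) : R :=
  S⁻¹ʳ * (b - x) * (1 - star b * x)⁻¹ʳ * T

theorem one_sub_star_moebiusMap_mul_self {b S T x : R} (hS : IsUnit S) (hT : IsUnit T)
    (hS2 : S * star S = 1 - b * star b) (hT2 : T * star T = 1 - star b * b)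
    (hU : IsUnit (1 - star b * x)) :
    1 - star (moebiusMap b S T x) * moebiusMap b S T x =
      star ((1 - star b * x)⁻¹ʳ * T) * (1 - star x * x) * ((1 - star b * x)⁻¹ʳ * T) := by
  rw [← Ring.moebius_identity (y := star x) (x := x) (hS2 ▸ hS.mul hS.star), moebiusMap]
  set U := 1 - star b * x
  have hP : (1 - b * star b)⁻¹ʳ = star S⁻¹ʳ * S⁻¹ʳ := by
    rw [← hS2, Ring.inverse_mul (.inl hS), Ring.inverse_star]
  have hTQT : star T * (1 - star b * b)⁻¹ʳ * T = 1 := by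
    rw [← hT2, Ring.inverse_mul (.inl hT), Ring.inverse_star, ← mul_assoc, ← star_mul,
      Ring.inverse_mul_cancel _ hT, star_one, one_mul, Ring.inverse_mul_cancel _ hT]
  have hCU : star (U⁻¹ʳ * T) * (1 - star x * b) = star T := by
    rw [star_mul, mul_assoc, ← Ring.inverse_star, show 1 - star x * b = star U by simp [U],
      Ring.inverse_mul_cancel _ hU.star, mul_one]
  have hUC : U * (U⁻¹ʳ * T) = T := Ring.mul_inverse_cancel_left _ _ hU
  clear_value U
  calc _ = star T * (1 - star b * b)⁻¹ʳ * T - star (S⁻¹ʳ * (b - x) * U⁻¹ʳ * T) *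
        (S⁻¹ʳ * (b - x) * U⁻¹ʳ * T) := by rw [hTQT]
    _ = star (U⁻¹ʳ * T) * (1 - star x * b) * (1 - star b * b)⁻¹ʳ * (U * (U⁻¹ʳ * T)) -
        star (U⁻¹ʳ * T) * (star b - star x) * (star S⁻¹ʳ * S⁻¹ʳ) * (b - x) * (U⁻¹ʳ * T) := by
      rw [hCU, hUC]; simp only [star_mul, star_sub]; noncomm_ring
    _ = _ := by rw [← hP]; noncomm_ring

end Moebius

namespace CStarAlgebra

variable {A : Type*} [CStarAlgebra A] [PartialOrder A] [StarOrderedRing A]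

theorem norm_lt_one_iff_isStrictlyPositive_one_sub_star_mul_self {a : A} :
    ‖a‖ < 1 ↔ IsStrictlyPositive (1 - star a * a) := by
  constructor
  · intro ha
    have hpos : 0 < 1 - ‖a‖ ^ 2 := by nlinarith [norm_nonneg a]
    refine (isStrictlyPositive_algebraMap (A := A) hpos).of_le ?_
    rw [map_sub, map_one, sub_le_sub_iff_left]
    exact star_mul_le_algebraMap_norm_sq
  · intro h
    nontriviality A
    have hmem : 1 - ‖star a * a‖ ∈ spectrum ℝ (1 - star a * a) := by
      rw [← map_one (algebraMap ℝ A), ← spectrum.singleton_sub_eq]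
      exact Set.sub_mem_sub rfl (norm_mem_spectrum_of_nonneg (star_mul_self_nonneg a))
    have := h.spectrum_pos hmem
    rw [CStarRing.norm_star_mul_self] at this
    nlinarith [norm_nonneg a]

theorem norm_moebiusMap_lt_one {b S T x : A} (hb : ‖b‖ < 1) (hS : IsUnit S) (hT : IsUnit T)
    (hS2 : S * star S = 1 - b * star b) (hT2 : T * star T = 1 - star b * b) (hx : ‖x‖ < 1) :
    ‖moebiusMap b S T x‖ < 1 := by
  have hU : IsUnit (1 - star b * x) := by
    refine isUnit_one_sub_of_norm_lt_one (norm_mul_le _ _ |>.trans_lt ?_)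
    rw [norm_star]
    nlinarith [norm_nonneg b, norm_nonneg x]
  rw [norm_lt_one_iff_isStrictlyPositive_one_sub_star_mul_self,
    one_sub_star_moebiusMap_mul_self hS hT hS2 hT2 hU,
    (hU.ringInverse.mul hT).isStrictlyPositive_star_left_conjugate_iff,
    ← norm_lt_one_iff_isStrictlyPositive_one_sub_star_mul_self]
  exact hx

end CStarAlgebra

/-- For `b` in the operator-norm unit ball `R_I` of `ℂ^{2×2}`, the map
`Φ_b(x) = (1-bb*)^{-1/2}(b-x)(1-b*x)^{-1}(1-b*b)^{1/2}` maps `R_I` into `R_I`.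
Here `S` and `T` are the positive square roots of `1-bb*` and `1-b*b`. -/
theorem cartan_moebius_self_map (b : Matrix (Fin 2) (Fin 2) ℂ) (hb : ‖b‖ < 1)
    (S T : Matrix (Fin 2) (Fin 2) ℂ) (hS : S.PosDef) (hT : T.PosDef)
    (hS2 : S * S = 1 - b * bᴴ) (hT2 : T * T = 1 - bᴴ * b) :
    ∀ x : Matrix (Fin 2) (Fin 2) ℂ, ‖x‖ < 1 →
      ‖S⁻¹ * (b - x) * (1 - bᴴ * x)⁻¹ * T‖ < 1 := by
  intro x hx
  simp only [nonsing_inv_eq_ringInverse, ← star_eq_conjTranspose] at hS2 hT2 ⊢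
  exact CStarAlgebra.norm_moebiusMap_lt_one hb hS.isUnit hT.isUnit
    (by rwa [hS.isHermitian.star_eq]) (by rwa [hT.isHermitian.star_eq]) hx
end

section
/- Let c ∈ 𝔻 and Φ the automorphism of R_I associated to the matrix b = [[0,0],[c,0]], given explicitly by Φ(x)₁₁ = √(1-|c|²)·(-x₁₁)/(1-conj(c)x₂₁), Φ(x)₁₂ = (-x₁₂ - conj(c)det x)/(1-conj(c)x₂₁), Φ(x)₂₁ = (-x₂₁+c)/(1-conj(c)x₂₁), Φ(x)₂₂ = √(1-|c|²)·(-x₂₂)/(1-conj(c)x₂₁). Then for every λ ∈ 𝔻 and x ∈ R_I, Φ of the matrix [[λx₁₁, λ²x₁₂],[x₂₁, λx₂₂]] equals [[λΦ(x)₁₁, λ²Φ(x)₁₂],[Φ(x)₂₁, λΦ(x)₂₂]]. -/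
open Complex Metric Set Matrix
open scoped ComplexConjugate Matrix.Norms.L2Operator

/-- The automorphism `Φ` of `R_I` associated to `b = [[0,0],[c,0]]`, written entrywise. -/
noncomputable def PhiLower (c : ℂ) (x : Matrix (Fin 2) (Fin 2) ℂ) :
    Matrix (Fin 2) (Fin 2) ℂ :=
  Matrix.of
    ![![(Real.sqrt (1 - ‖c‖ ^ 2) : ℂ) * (-(x 0 0)) / (1 - conj c * x 1 0),
        (-(x 0 1) - conj c * x.det) / (1 - conj c * x 1 0)],
      ![(-(x 1 0) + c) / (1 - conj c * x 1 0),
        (Real.sqrt (1 - ‖c‖ ^ 2) : ℂ) * (-(x 1 1)) / (1 - conj c * x 1 0)]]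

/-- The entrywise weighting `[[λx₁₁, λ²x₁₂],[x₂₁, λx₂₂]]`. -/
def wt (l : ℂ) (x : Matrix (Fin 2) (Fin 2) ℂ) : Matrix (Fin 2) (Fin 2) ℂ :=
  Matrix.of ![![l * x 0 0, l ^ 2 * x 0 1], ![x 1 0, l * x 1 1]]

theorem det_wt (l : ℂ) (x : Matrix (Fin 2) (Fin 2) ℂ) : (wt l x).det = l ^ 2 * x.det := by
  rw [wt, det_fin_two_of, det_fin_two x]
  ring

-- The denominator `1 - conj c * x₂₁` is unweighted and `det` has weight `λ²`, so each entry is homogeneous.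
theorem phiLower_equivariant_general (c : ℂ) (l : ℂ)
    (x : Matrix (Fin 2) (Fin 2) ℂ) :
    PhiLower c (wt l x) = wt l (PhiLower c x) := by
  rw [PhiLower, det_wt]
  ext i j
  fin_cases i <;> fin_cases j <;>
    simp only [PhiLower, wt, of_apply, cons_val', cons_val_zero, cons_val_one,
      empty_val', cons_val_fin_one, Fin.zero_eta, Fin.mk_one] <;>
    ring

/-- `Φ` is equivariant with respect to the weighting `(λ, λ², 1, λ)` of the entries. -/
theorem phiLower_equivariant (c : ℂ) (hc : ‖c‖ < 1) (l : ℂ)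
    (hl : ‖l‖ < 1) (x : Matrix (Fin 2) (Fin 2) ℂ) (hx : ‖x‖ < 1) :
    PhiLower c (wt l x) = wt l (PhiLower c x) :=
  phiLower_equivariant_general c l x
end
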